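/- Assume the rainbow-subgraph setup: c is an edge-coloring of the complete graph K_n containing no rainbow copy of (t+2)K_3 (t ≥ 0); G is a spanning subgraph of K_n that is rainbow under c and contains exactly one edge of every color used by c; M is a family of t+1 pairwise vertex-disjoint triangles in G; D is the induced subgraph of G on the vertices not covered by M; and X is a set of vertices of D that is independent in D such that any two distinct vertices of X have at least 4 common neighbors in D. Suppose (x,y,z) is a triangle of M and T ⊆ X with |T| ≥ 4 satisfies c(uv) = c(xy) for all distinct u, v ∈ T. Suppose further that (x₁,y₁,z₁) is a triangle of M distinct from (x,y,z) and that there exists an edge p₁q₁ of D such that z₁ is adjacent in G to both p₁ and q₁. Then no vertex of {x, y, z} is adjacent in G to both x₁ and y₁. -/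
import Mathlib


/-- `G` contains `k` pairwise vertex-disjoint triangles whose `3k` edges receive pairwise
distinct colors under `c`: a rainbow copy of `k·K₃`. -/
def RainbowIndepTrianglesIn {V : Type*} (G : SimpleGraph V) (k : ℕ)
    (c : Sym2 V → ℕ) : Prop :=
  ∃ f : Fin k → Fin 3 → V,
    Function.Injective (fun p : Fin k × Fin 3 => f p.1 p.2) ∧
    (∀ i, G.Adj (f i 0) (f i 1) ∧ G.Adj (f i 1) (f i 2) ∧ G.Adj (f i 0) (f i 2)) ∧
    Function.Injective (fun p : Fin k × Fin 3 => c s(f p.1 p.2, f p.1 (p.2 + 1)))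

/-- Claim 8: in the rainbow-subgraph setup, if `(x,y,z)` is a triangle of `M`, `T ⊆ X`
with `|T| ≥ 4` has all its pairs colored `c(xy)`, and `(x₁,y₁,z₁)` is another triangle of
`M` such that `z₁` is adjacent to both endpoints of an edge `p₁q₁` of `D`, then no vertex
of `{x, y, z}` is adjacent to both `x₁` and `y₁`. -/
theorem no_B_vertex_friendly_with_A_edge (t n : ℕ) (c : Sym2 (Fin n) → ℕ)
    -- the coloring `c` of `K_n` admits no rainbow `(t+2)K₃`
    (hnoRainbow : ¬ RainbowIndepTrianglesIn (⊤ : SimpleGraph (Fin n)) (t + 2) c)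
    -- `G` is a (spanning) rainbow subgraph of `K_n` with one edge of each used color
    (G : SimpleGraph (Fin n))
    (hGrainbow : ∀ e ∈ G.edgeSet, ∀ e' ∈ G.edgeSet, c e = c e' → e = e')
    (hGcolors : ∀ e ∈ (⊤ : SimpleGraph (Fin n)).edgeSet, ∃ e' ∈ G.edgeSet, c e' = c e)
    -- `M` is a family of `t+1` pairwise vertex-disjoint triangles of `G`, given by `f`
    (f : Fin (t + 1) → Fin 3 → Fin n)
    (hinj : Function.Injective fun p : Fin (t + 1) × Fin 3 => f p.1 p.2)
    (htri : ∀ i, G.Adj (f i 0) (f i 1) ∧ G.Adj (f i 1) (f i 2) ∧ G.Adj (f i 0) (f i 2))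
    -- `Dset` is the vertex set of `D`, the induced subgraph on vertices not covered by `M`
    (Dset : Set (Fin n)) (hDset : Dset = {x | ∀ i j, f i j ≠ x})
    -- `X ⊆ V(D)` is independent in `D`, any two of its vertices having
    -- at least `4` common neighbors in `D`
    (X : Set (Fin n)) (hXD : X ⊆ Dset)
    (hXind : ∀ u ∈ X, ∀ v ∈ X, u ≠ v → ¬ G.Adj u v)
    (hXcn : ∀ u ∈ X, ∀ v ∈ X, u ≠ v →
      4 ≤ (G.neighborSet u ∩ G.neighborSet v ∩ Dset).ncard)
    -- `(x, y, z)` is a triangle of `M`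
    (x y z : Fin n) (i : Fin (t + 1)) (σ : Equiv.Perm (Fin 3))
    (hx : x = f i (σ 0)) (hy : y = f i (σ 1)) (hz : z = f i (σ 2))
    -- `T ⊆ X` with `|T| ≥ 4`, all pairs colored `c(xy)`
    (T : Set (Fin n)) (hTX : T ⊆ X) (hTcard : 4 ≤ T.ncard)
    (hTc : ∀ u ∈ T, ∀ v ∈ T, u ≠ v → c s(u, v) = c s(x, y))
    -- `(x₁, y₁, z₁)` is a triangle of `M` distinct from `(x, y, z)`
    (x₁ y₁ z₁ : Fin n) (i' : Fin (t + 1)) (hi' : i' ≠ i) (σ' : Equiv.Perm (Fin 3))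
    (hx₁ : x₁ = f i' (σ' 0)) (hy₁ : y₁ = f i' (σ' 1)) (hz₁ : z₁ = f i' (σ' 2))
    -- `p₁q₁` is an edge of `D` whose endpoints are both adjacent to `z₁`
    (p₁ q₁ : Fin n) (hp₁ : p₁ ∈ Dset) (hq₁ : q₁ ∈ Dset) (hpq : G.Adj p₁ q₁)
    (hz₁p : G.Adj z₁ p₁) (hz₁q : G.Adj z₁ q₁) :
    ∀ v ∈ ({x, y, z} : Set (Fin n)), ¬ (G.Adj v x₁ ∧ G.Adj v y₁) := by
  classical
  intro v hv hcon
  obtain ⟨hvx₁, hvy₁⟩ := hcon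
  -- basic helpers
  have hfm' : ∀ (j j' : Fin (t+1)) (m m' : Fin 3), f j m = f j' m' → j = j' ∧ m = m' := by
    intro j j' m m' h
    have := hinj (a₁ := (j, m)) (a₂ := (j', m')) h
    exact ⟨congrArg Prod.fst this, congrArg Prod.snd this⟩
  have hf_ne : ∀ (j j' : Fin (t+1)) (m m' : Fin 3), j ≠ j' → f j m ≠ f j' m' :=
    fun j j' m m' hjj' h => hjj' (hfm' j j' m m' h).1
  have hND : ∀ a ∈ Dset, ∀ (j : Fin (t+1)) (m : Fin 3), f j m ≠ a := by
    intro a ha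
    rw [hDset] at ha
    exact ha
  have hadj : ∀ (j : Fin (t+1)) (a b : Fin 3), a ≠ b → G.Adj (f j a) (f j b) := by
    intro j a b hab
    obtain ⟨h01, h12, h02⟩ := htri j
    fin_cases a <;> fin_cases b <;>
      first
        | exact absurd rfl hab
        | exact h01 | exact h12 | exact h02
        | exact h01.symm | exact h12.symm | exact h02.symm
  obtain ⟨a, hva⟩ : ∃ a : Fin 3, v = f i (σ a) := by
    simp only [Set.mem_insert_iff, Set.mem_singleton_iff] at hv
    rcases hv with h | h | h
    exacts [⟨0, h.trans hx⟩, ⟨1, h.trans hy⟩, ⟨2, h.trans hz⟩]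
  subst hx hy hz hx₁ hy₁ hz₁ hva
  have hii' : i ≠ i' := Ne.symm hi'
  have hσ' : ∀ (b b' : Fin 3), b ≠ b' → f i' (σ' b) ≠ f i' (σ' b') :=
    fun b b' hb h => hb (σ'.injective (hfm' _ _ _ _ h).2)
  -- choose u, w ∈ T avoiding p₁ q₁
  have hpair2 : ({p₁, q₁} : Set (Fin n)).ncard ≤ 2 := by
    refine le_trans (Set.ncard_insert_le _ _) ?_
    simp
  have h2 : 1 < (T \ {p₁, q₁}).ncard := by
    have hsub : T ⊆ (T \ {p₁, q₁}) ∪ {p₁, q₁} := by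
      intro b hb
      by_cases hbp : b ∈ ({p₁, q₁} : Set (Fin n))
      · exact Or.inr hbp
      · exact Or.inl ⟨hb, hbp⟩
    have h3 := Set.ncard_le_ncard hsub (Set.toFinite _)
    have h4 := Set.ncard_union_le (T \ {p₁, q₁}) ({p₁, q₁} : Set (Fin n))
    omega
  obtain ⟨u, w, hu', hw', huw⟩ := (Set.one_lt_ncard_iff (Set.toFinite _)).mp h2
  obtain ⟨hu, hupq⟩ := hu'
  obtain ⟨hw, hwpq⟩ := hw'
  simp only [Set.mem_insert_iff, Set.mem_singleton_iff, not_or] at hupq hwpq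
  obtain ⟨hup, huq⟩ := hupq
  obtain ⟨hwp, hwq⟩ := hwpq
  have huD : u ∈ Dset := hXD (hTX hu)
  have hwD : w ∈ Dset := hXD (hTX hw)
  -- choose d, a common neighbor of u and w avoiding p₁ q₁
  have hcn := hXcn u (hTX hu) w (hTX hw) huw
  obtain ⟨d, hd⟩ :
      (((G.neighborSet u ∩ G.neighborSet w ∩ Dset) \ {p₁, q₁})).Nonempty := by
    rw [Set.nonempty_iff_ne_empty]
    intro hemp
    have hsub2 := Set.diff_eq_empty.mp hemp
    have := Set.ncard_le_ncard hsub2 (Set.toFinite _)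
    omega
  obtain ⟨⟨⟨hduN, hdwN⟩, hdD⟩, hdpq⟩ := hd
  simp only [Set.mem_insert_iff, Set.mem_singleton_iff, not_or] at hdpq
  obtain ⟨hdp, hdq⟩ := hdpq
  have hud : G.Adj u d := hduN
  have hwd : G.Adj w d := hdwN
  -- the new triangle family
  apply hnoRainbow
  set A : Fin 3 → Fin n := ![f i (σ a), f i' (σ' 0), f i' (σ' 1)] with hAdef
  set B : Fin 3 → Fin n := ![f i' (σ' 2), p₁, q₁] with hBdef
  set C : Fin 3 → Fin n := ![u, d, w] with hCdef
  set g : Fin (t+2) → Fin 3 → Fin n := fun k m =>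
    if h : (k : ℕ) < t+1 then
      if (⟨(k : ℕ), h⟩ : Fin (t+1)) = i then A m
      else if (⟨(k : ℕ), h⟩ : Fin (t+1)) = i' then B m
      else f ⟨(k : ℕ), h⟩ m
    else C m with hgdef
  have hrow : ∀ k : Fin (t+2),
      ((k : ℕ) = (i : ℕ) ∧ ∀ m, g k m = A m) ∨
      ((k : ℕ) = (i' : ℕ) ∧ ∀ m, g k m = B m) ∨
      (∃ h : (k : ℕ) < t+1, (⟨(k : ℕ), h⟩ : Fin (t+1)) ≠ i ∧
        (⟨(k : ℕ), h⟩ : Fin (t+1)) ≠ i' ∧ ∀ m, g k m = f ⟨(k : ℕ), h⟩ m) ∨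
      ((k : ℕ) = t+1 ∧ ∀ m, g k m = C m) := by
    intro k
    by_cases h : (k : ℕ) < t+1
    · by_cases h1 : (⟨(k : ℕ), h⟩ : Fin (t+1)) = i
      · refine Or.inl ⟨by rw [← h1], fun m => ?_⟩
        simp only [hgdef, dif_pos h, if_pos h1]
      · by_cases h2 : (⟨(k : ℕ), h⟩ : Fin (t+1)) = i'
        · refine Or.inr (Or.inl ⟨by rw [← h2], fun m => ?_⟩)
          simp only [hgdef, dif_pos h, if_neg h1, if_pos h2]
        · refine Or.inr (Or.inr (Or.inl ⟨h, h1, h2, fun m => ?_⟩))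
          simp only [hgdef, dif_pos h, if_neg h1, if_neg h2]
    · refine Or.inr (Or.inr (Or.inr ⟨by have := k.isLt; omega, fun m => ?_⟩))
      simp only [hgdef, dif_neg h]
  -- pairwise distinctness of rows
  have hAB : ∀ m m' : Fin 3, A m ≠ B m' := by
    intro m m'
    fin_cases m <;> fin_cases m' <;> simp only [hAdef, hBdef] <;> norm_num
    exacts [hf_ne i i' _ _ hii', hND p₁ hp₁ i (σ a), hND q₁ hq₁ i (σ a),
      hσ' 0 2 (by decide), hND p₁ hp₁ i' (σ' 0), hND q₁ hq₁ i' (σ' 0),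
      hσ' 1 2 (by decide), hND p₁ hp₁ i' (σ' 1), hND q₁ hq₁ i' (σ' 1)]
  have hAC : ∀ m m' : Fin 3, A m ≠ C m' := by
    intro m m'
    fin_cases m <;> fin_cases m' <;> simp only [hAdef, hCdef] <;> norm_num
    exacts [hND u huD i (σ a), hND d hdD i (σ a), hND w hwD i (σ a),
      hND u huD i' (σ' 0), hND d hdD i' (σ' 0), hND w hwD i' (σ' 0),
      hND u huD i' (σ' 1), hND d hdD i' (σ' 1), hND w hwD i' (σ' 1)]
  have hBC : ∀ m m' : Fin 3, B m ≠ C m' := by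
    intro m m'
    fin_cases m <;> fin_cases m' <;> simp only [hBdef, hCdef] <;> norm_num
    exacts [hND u huD i' (σ' 2), hND d hdD i' (σ' 2), hND w hwD i' (σ' 2),
      Ne.symm hup, Ne.symm hdp, Ne.symm hwp,
      Ne.symm huq, Ne.symm hdq, Ne.symm hwq]
  have hA_f : ∀ (j : Fin (t+1)), j ≠ i → j ≠ i' → ∀ (m m' : Fin 3), A m ≠ f j m' := by
    intro j hj hj' m m'
    fin_cases m <;> simp only [hAdef] <;> norm_num
    exacts [hf_ne i j _ _ (Ne.symm hj), hf_ne i' j _ _ (Ne.symm hj'),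
      hf_ne i' j _ _ (Ne.symm hj')]
  have hB_f : ∀ (j : Fin (t+1)), j ≠ i → j ≠ i' → ∀ (m m' : Fin 3), B m ≠ f j m' := by
    intro j hj hj' m m'
    fin_cases m <;> simp only [hBdef] <;> norm_num
    exacts [hf_ne i' j _ _ (Ne.symm hj'), Ne.symm (hND p₁ hp₁ j m'),
      Ne.symm (hND q₁ hq₁ j m')]
  have hC_f : ∀ (j : Fin (t+1)), j ≠ i → j ≠ i' → ∀ (m m' : Fin 3), C m ≠ f j m' := by
    intro j hj hj' m m'
    fin_cases m <;> simp only [hCdef] <;> norm_num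
    exacts [Ne.symm (hND u huD j m'), Ne.symm (hND d hdD j m'), Ne.symm (hND w hwD j m')]
  have hArow : ∀ m m' : Fin 3, m ≠ m' → A m ≠ A m' := by
    intro m m' hmm
    fin_cases m <;> fin_cases m' <;> simp only [hAdef] <;> norm_num <;>
      first
        | exact absurd rfl hmm
        | exact hf_ne i i' _ _ hii'
        | exact hf_ne i' i _ _ hi'
        | exact hσ' _ _ (by decide)
  have hBrow : ∀ m m' : Fin 3, m ≠ m' → B m ≠ B m' := by
    intro m m' hmm
    fin_cases m <;> fin_cases m' <;> simp only [hBdef] <;> norm_num <;>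
      first
        | exact absurd rfl hmm
        | exact hND p₁ hp₁ i' (σ' 2)
        | exact hND q₁ hq₁ i' (σ' 2)
        | exact Ne.symm (hND p₁ hp₁ i' (σ' 2))
        | exact Ne.symm (hND q₁ hq₁ i' (σ' 2))
        | exact hpq.ne
        | exact hpq.ne.symm
  have hCrow : ∀ m m' : Fin 3, m ≠ m' → C m ≠ C m' := by
    intro m m' hmm
    fin_cases m <;> fin_cases m' <;> simp only [hCdef] <;> norm_num <;>
      first
        | exact absurd rfl hmm
        | exact hud.ne
        | exact Ne.symm hud.ne
        | exact Ne.symm hwd.ne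
        | exact hwd.ne
        | exact huw
        | exact Ne.symm huw
  have hfrow : ∀ (j : Fin (t+1)) (m m' : Fin 3), m ≠ m' → f j m ≠ f j m' :=
    fun j m m' hmm h => hmm (hfm' _ _ _ _ h).2
  -- injectivity of the vertex map
  have hginj : Function.Injective (fun p : Fin (t+2) × Fin 3 => g p.1 p.2) := by
    rintro ⟨k, m⟩ ⟨k', m'⟩ h
    simp only at h
    have hkm : k = k' ∧ m = m' := by
      rcases hrow k with ⟨hk, e⟩ | ⟨hk, e⟩ | ⟨hlt, hn1, hn2, e⟩ | ⟨hk, e⟩ <;>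
        rcases hrow k' with ⟨hk', e'⟩ | ⟨hk', e'⟩ | ⟨hlt', hn1', hn2', e'⟩ | ⟨hk', e'⟩ <;>
          rw [e m, e' m'] at h
      · refine ⟨Fin.ext (hk.trans hk'.symm), ?_⟩
        by_contra hmm
        exact hArow m m' hmm h
      · exact absurd h (hAB m m')
      · exact absurd h (hA_f _ hn1' hn2' m m')
      · exact absurd h (hAC m m')
      · exact absurd h.symm (hAB m' m)
      · refine ⟨Fin.ext (hk.trans hk'.symm), ?_⟩
        by_contra hmm
        exact hBrow m m' hmm h
      · exact absurd h (hB_f _ hn1' hn2' m m')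
      · exact absurd h (hBC m m')
      · exact absurd h.symm (hA_f _ hn1 hn2 m' m)
      · exact absurd h.symm (hB_f _ hn1 hn2 m' m)
      · obtain ⟨h1, h2⟩ := hfm' _ _ _ _ h
        refine ⟨Fin.ext ?_, h2⟩
        simpa using h1
      · exact absurd h.symm (hC_f _ hn1 hn2 m' m)
      · exact absurd h.symm (hAC m' m)
      · exact absurd h.symm (hBC m' m)
      · exact absurd h (hC_f _ hn1' hn2' m m')
      · refine ⟨Fin.ext (hk.trans hk'.symm), ?_⟩
        by_contra hmm
        exact hCrow m m' hmm h
    exact Prod.ext hkm.1 hkm.2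
  have hne3 : ∀ (k : Fin (t+2)) (m m' : Fin 3), m ≠ m' → g k m ≠ g k m' := by
    intro k m m' hmm h
    exact hmm (congrArg Prod.snd (hginj (a₁ := (k, m)) (a₂ := (k, m')) h))
  -- additional facts for the color argument
  have hxyG : s(f i (σ 0), f i (σ 1)) ∈ G.edgeSet :=
    G.mem_edgeSet.mpr (hadj i (σ 0) (σ 1) (σ.injective.ne (by decide)))
  have e20 : ((2 : Fin 3) + 1) = 0 := rfl
  have e01 : ((0 : Fin 3) + 1) = 1 := rfl
  have e12 : ((1 : Fin 3) + 1) = 2 := rfl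
  have hGedge : ∀ (k : Fin (t+2)) (m : Fin 3), ¬((k : ℕ) = t+1 ∧ m = 2) →
      G.Adj (g k m) (g k (m+1)) := by
    intro k m hkm
    rcases hrow k with ⟨hk, e⟩ | ⟨hk, e⟩ | ⟨hlt, hn1, hn2, e⟩ | ⟨hk, e⟩ <;>
      rw [e m, e (m+1)]
    · fin_cases m <;> simp only [e20, e01, e12, hAdef] <;> norm_num
      exacts [hvx₁, hadj i' (σ' 0) (σ' 1) (σ'.injective.ne (by decide)), hvy₁.symm]
    · fin_cases m <;> simp only [e20, e01, e12, hBdef] <;> norm_num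
      exacts [hz₁p, hpq, hz₁q.symm]
    · exact hadj _ m (m+1) (by fin_cases m <;> decide)
    · fin_cases m <;> simp only [e20, e01, e12, hCdef] <;> norm_num
      · exact hud
      · exact hwd.symm
      · exact absurd ⟨hk, rfl⟩ hkm
  have hlastc : ∀ k : Fin (t+2), (k : ℕ) = t+1 →
      c s(g k 2, g k (2+1)) = c s(f i (σ 0), f i (σ 1)) := by
    intro k hk
    rcases hrow k with ⟨h, e⟩ | ⟨h, e⟩ | ⟨h, hn1, hn2, e⟩ | ⟨h, e⟩
    · exact absurd hk (by have := i.isLt; omega)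
    · exact absurd hk (by have := i'.isLt; omega)
    · exact absurd hk (by omega)
    · rw [e 2, e (2+1), e20]
      have hcolor := hTc w hw u hu (Ne.symm huw)
      simpa [hCdef] using hcolor
  have hmem : ∀ (k : Fin (t+2)) (m : Fin 3),
      g k m = f i (σ 0) ∨ g k m = f i (σ 1) → g k m = f i (σ a) := by
    intro k m hm
    rcases hrow k with ⟨hk, e⟩ | ⟨hk, e⟩ | ⟨hlt, hn1, hn2, e⟩ | ⟨hk, e⟩ <;>
      rw [e m] at hm ⊢ <;>
      [skip; skip; skip; skip] <;>
      fin_cases m <;>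
      first
        | rfl
        | (rcases hm with hm | hm <;>
            first
              | rfl
              | exact absurd hm (hf_ne _ _ _ _ hi')
              | exact absurd hm (hf_ne _ _ _ _ hn1)
              | exact absurd hm.symm (hND _ huD _ _)
              | exact absurd hm.symm (hND _ hwD _ _)
              | exact absurd hm.symm (hND _ hdD _ _)
              | exact absurd hm.symm (hND _ hp₁ _ _)
              | exact absurd hm.symm (hND _ hq₁ _ _))
  have hedge : ∀ (k : Fin (t+2)) (m : Fin 3) (k' : Fin (t+2)) (m' : Fin 3),
      s(g k m, g k (m+1)) = s(g k' m', g k' (m'+1)) → (k, m) = (k', m') := by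
    intro k m k' m' h
    rw [Sym2.eq_iff] at h
    rcases h with ⟨h1, h2⟩ | ⟨h1, h2⟩
    · exact hginj (a₁ := (k, m)) (a₂ := (k', m')) h1
    · have e1 := hginj (a₁ := (k, m)) (a₂ := (k', m'+1)) h1
      have e2 := hginj (a₁ := (k, m+1)) (a₂ := (k', m')) h2
      have em : m = m' + 1 := congrArg Prod.snd e1
      have em2 : m + 1 = m' := congrArg Prod.snd e2
      exfalso
      rw [← em2] at em
      revert em
      fin_cases m <;> decide
  refine ⟨g, hginj, ?_, ?_⟩
  · intro k
    refine ⟨?_, ?_, ?_⟩ <;> rw [SimpleGraph.top_adj]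
    · exact hne3 k 0 1 (by decide)
    · exact hne3 k 1 2 (by decide)
    · exact hne3 k 0 2 (by decide)
  · rintro ⟨k, m⟩ ⟨k', m'⟩ h
    simp only at h
    by_cases hk1 : (k : ℕ) = t+1 ∧ m = 2 <;> by_cases hk2 : (k' : ℕ) = t+1 ∧ m' = 2
    · exact Prod.ext (Fin.ext (hk1.1.trans hk2.1.symm)) (hk1.2.trans hk2.2.symm)
    · exfalso
      have hadj' : G.Adj (g k' m') (g k' (m'+1)) := hGedge k' m' hk2
      rw [hk1.2, hlastc k hk1.1] at h
      have hEq : s(f i (σ 0), f i (σ 1)) = s(g k' m', g k' (m'+1)) :=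
        hGrainbow _ hxyG _ (G.mem_edgeSet.mpr hadj') h
      rw [Sym2.eq_iff] at hEq
      have h01 : g k' m' = f i (σ a) ∧ g k' (m'+1) = f i (σ a) := by
        rcases hEq with ⟨e1, e2⟩ | ⟨e1, e2⟩
        · exact ⟨hmem _ _ (Or.inl e1.symm), hmem _ _ (Or.inr e2.symm)⟩
        · exact ⟨hmem _ _ (Or.inr e2.symm), hmem _ _ (Or.inl e1.symm)⟩
      exact hne3 k' m' (m'+1) (by fin_cases m' <;> decide) (h01.1.trans h01.2.symm)
    · exfalso
      have hadj' : G.Adj (g k m) (g k (m+1)) := hGedge k m hk1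
      rw [hk2.2, hlastc k' hk2.1] at h
      have hEq : s(f i (σ 0), f i (σ 1)) = s(g k m, g k (m+1)) :=
        hGrainbow _ hxyG _ (G.mem_edgeSet.mpr hadj') h.symm
      rw [Sym2.eq_iff] at hEq
      have h01 : g k m = f i (σ a) ∧ g k (m+1) = f i (σ a) := by
        rcases hEq with ⟨e1, e2⟩ | ⟨e1, e2⟩
        · exact ⟨hmem _ _ (Or.inl e1.symm), hmem _ _ (Or.inr e2.symm)⟩
        · exact ⟨hmem _ _ (Or.inr e2.symm), hmem _ _ (Or.inl e1.symm)⟩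
      exact hne3 k m (m+1) (by fin_cases m <;> decide) (h01.1.trans h01.2.symm)
    · have hEq := hGrainbow _ (G.mem_edgeSet.mpr (hGedge k m hk1)) _
        (G.mem_edgeSet.mpr (hGedge k' m' hk2)) h
      exact hedge k m k' m' hEq
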